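/- arXiv:2309.06026 — 2 statements merged into one kernel-verified Lean document; each statement's English description precedes it below -/
import Mathlib

section
/- Let $1/2 < \gamma_2 < \gamma_1 < 1$. Define $A_1 = \gamma_1^3(\gamma_1-1)^2$, $B_1 = \gamma_1(\gamma_1-1)\gamma_2(\gamma_2-1)(\gamma_1+\gamma_2)$, and $C_1 = \gamma_2^3(\gamma_2-1)^2$. Then $B_1^2 - 4A_1C_1 > 0$. -/
/-- The discriminant of `A s² + B s t + C t²` with the coefficients of the statement,
since `(a + b)² - 4ab = (a - b)²`. -/
theorem hessian_form_discriminant_eq {R : Type*} [CommRing R] (a b : R) :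
    (a * (a - 1) * b * (b - 1) * (a + b)) ^ 2 - 4 * (a ^ 3 * (a - 1) ^ 2) * (b ^ 3 * (b - 1) ^ 2)
      = (a * (a - 1) * b * (b - 1) * (a - b)) ^ 2 := by
  ring

theorem stmt_3 (γ1 γ2 : ℝ) (h1 : 1/2 < γ2) (h2 : γ2 < γ1) (h3 : γ1 < 1) :
    (γ1 * (γ1 - 1) * γ2 * (γ2 - 1) * (γ1 + γ2)) ^ 2 -
      4 * (γ1 ^ 3 * (γ1 - 1) ^ 2) * (γ2 ^ 3 * (γ2 - 1) ^ 2) > 0 := by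
  rw [hessian_form_discriminant_eq, gt_iff_lt]
  have hne : γ1 * (γ1 - 1) * γ2 * (γ2 - 1) * (γ1 - γ2) ≠ 0 := by
    simp only [ne_eq, mul_eq_zero, sub_eq_zero, not_or]
    refine ⟨⟨⟨⟨?_, ?_⟩, ?_⟩, ?_⟩, ?_⟩ <;> intro h <;> linarith
  exact sq_pos_of_ne_zero hne
end

section
/- For every real number $H > 1$ and every real $\theta$, $\left|\psi(\theta) + \sum_{0 < |h| \le H} \frac{e(\theta h)}{2\pi i h}\right| \ll \min\left(1, \frac{1}{H \|\theta\|}\right)$, where the implied constant is absolute. -/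
noncomputable def e (x : ℝ) : ℂ := Complex.exp (2 * Real.pi * Complex.I * x)

/-- distance from `t` to the nearest integer -/
noncomputable def nint (t : ℝ) : ℝ := |t - round t|

/-!
Pairing `h` with `-h` turns the truncated Fourier sum into
`S_N(θ) = ∑_{h=1}^N sin(2πhθ)/(πh)`, so the quantity to bound is the 1-periodic function
`ψ + S_N`, odd away from the integers, and it suffices to treat `0 < x ≤ 1/2` with `N = ⌊H⌋`.
There `G(x) = x - 1/2 + S_N(x)` vanishes at `1/2` and has the Dirichlet kernel
`sin((2N+1)πt)/sin(πt)` as derivative, so `G(x)` is minus its integral over `[x, 1/2]`.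
Integrating by parts against the decreasing weight `1/sin(πt)` bounds this by
`2/((2N+1)π sin(πx)) ≤ 1/((2N+1)πx)` (Jordan's inequality), which settles `Hx ≥ 1`; for
`Hx < 1` the trivial bound `|S_N(x)| ≤ 2Nx` suffices.
-/

open Real Finset

theorem Finset.sum_Icc_erase_zero_eq_sum_add_neg {M : Type*} [AddCommMonoid M] (N : ℤ)
    (f : ℤ → M) :
    ∑ h ∈ (Icc (-N) N).erase 0, f h = ∑ h ∈ Icc 1 N, (f h + f (-h)) := by
  have hsplit : (Icc (-N) N).erase 0 = Icc 1 N ∪ (Icc 1 N).map (Equiv.neg ℤ).toEmbedding := by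
    ext h
    simp only [mem_erase, mem_Icc, mem_union, mem_map_equiv, Equiv.neg_symm, Equiv.neg_apply]
    omega
  have hdisj : Disjoint (Icc 1 N) ((Icc 1 N).map (Equiv.neg ℤ).toEmbedding) := by
    rw [disjoint_left]
    intro h
    simp only [mem_Icc, mem_map_equiv, Equiv.neg_symm, Equiv.neg_apply]
    omega
  rw [hsplit, sum_union hdisj, sum_map, sum_add_distrib]
  rfl

theorem e_sub_e_neg (a : ℝ) : e a - e (-a) = 2 * Complex.I * sin (2 * π * a) := by
  have hexp : ∀ b : ℝ, e b = Complex.exp ((2 * π * b : ℝ) * Complex.I) := fun b => by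
    rw [e]; push_cast; ring_nf
  rw [hexp, hexp, Complex.exp_mul_I, Complex.exp_mul_I]
  push_cast
  rw [show 2 * (π : ℂ) * -a = -(2 * π * a) by ring, Complex.cos_neg, Complex.sin_neg]
  ring

theorem e_div_add_e_neg_div {h : ℝ} (hh : h ≠ 0) (a : ℝ) :
    e (a * h) / (2 * π * Complex.I * h) + e (a * -h) / (2 * π * Complex.I * (-h : ℝ))
      = (sin (2 * π * h * a) / (π * h) : ℝ) := by
  have hπ : (π : ℂ) ≠ 0 := by exact_mod_cast pi_ne_zero
  have hh' : (h : ℂ) ≠ 0 := by exact_mod_cast hh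
  have hI : Complex.I ≠ 0 := Complex.I_ne_zero
  have hsum : e (a * h) / (2 * π * Complex.I * h) + e (a * -h) / (2 * π * Complex.I * (-h : ℝ))
      = (e (a * h) - e (-(a * h))) / (2 * π * Complex.I * h) := by
    push_cast; rw [mul_neg]; field_simp; ring
  rw [hsum, e_sub_e_neg]
  push_cast
  field_simp

noncomputable def sineSum (N : ℤ) (θ : ℝ) : ℝ :=
  ∑ h ∈ Icc 1 N, sin (2 * π * h * θ) / (π * h)

theorem sum_e_div_eq_sineSum (N : ℤ) (θ : ℝ) :
    ∑ h ∈ (Icc (-N) N).erase 0, e (θ * h) / (2 * π * Complex.I * h) = sineSum N θ := by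
  rw [sum_Icc_erase_zero_eq_sum_add_neg, sineSum, Complex.ofReal_sum]
  refine sum_congr rfl fun h hh => ?_
  have hh0 : (h : ℝ) ≠ 0 := by
    have := (mem_Icc.mp hh).1
    exact_mod_cast (by omega : h ≠ 0)
  rw [← e_div_add_e_neg_div hh0 θ]
  push_cast
  rfl

noncomputable def dirichletKernel (N : ℤ) (t : ℝ) : ℝ :=
  1 + ∑ h ∈ Icc 1 N, 2 * cos (2 * π * h * t)

theorem sin_mul_dirichletKernel {N : ℤ} (hN : 0 ≤ N) (t : ℝ) :
    sin (π * t) * dirichletKernel N t = sin ((2 * N + 1) * π * t) := by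
  induction N, hN using Int.leInduction with
  | base => simp [dirichletKernel]
  | succ N hN ih =>
    have hIcc : Icc 1 (N + 1) = insert (N + 1) (Icc 1 N) := by
      ext x; simp only [mem_Icc, mem_insert]; omega
    have htelescope : sin ((2 * (N + 1 : ℤ) + 1) * π * t) - sin ((2 * N + 1) * π * t)
        = sin (π * t) * (2 * cos (2 * π * (N + 1 : ℤ) * t)) := by
      rw [sin_sub_sin]; push_cast; ring_nf
    rw [dirichletKernel, hIcc, sum_insert (by simp), add_left_comm, mul_add,
      ← dirichletKernel, ih]
    linarith

theorem hasDerivAt_sineSum (N : ℤ) (t : ℝ) :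
    HasDerivAt (sineSum N) (dirichletKernel N t - 1) t := by
  rw [dirichletKernel, add_sub_cancel_left]
  unfold sineSum
  refine HasDerivAt.fun_sum fun h hh => ?_
  have hh0 : (h : ℝ) ≠ 0 := by
    have := (mem_Icc.mp hh).1
    exact_mod_cast (by omega : h ≠ 0)
  refine (((hasDerivAt_id' t).const_mul (2 * π * h)).sin.div_const (π * h)).congr_deriv ?_
  field_simp

theorem sineSum_half (N : ℤ) : sineSum N (1 / 2) = 0 :=
  sum_eq_zero fun h _ => by
    rw [show 2 * π * h * (1 / 2) = h * π by ring, sin_int_mul_pi, zero_div]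

theorem sineSum_add_intCast (N : ℤ) (θ : ℝ) (k : ℤ) : sineSum N (θ + k) = sineSum N θ :=
  sum_congr rfl fun h _ => by
    rw [show 2 * π * h * (θ + k) = 2 * π * h * θ + (k * h : ℤ) * (2 * π) by push_cast; ring,
      sin_add_int_mul_two_pi]

theorem sineSum_neg (N : ℤ) (θ : ℝ) : sineSum N (-θ) = -sineSum N θ := by
  rw [sineSum, sineSum, ← sum_neg_distrib]
  refine sum_congr rfl fun h _ => ?_
  rw [mul_neg, sin_neg, neg_div]

theorem abs_sineSum_le {N : ℤ} (hN : 0 ≤ N) {x : ℝ} (hx : 0 ≤ x) :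
    |sineSum N x| ≤ 2 * N * x := by
  have hterm : ∀ h ∈ Icc 1 N, |sin (2 * π * h * x) / (π * h)| ≤ 2 * x := fun h hh => by
    have hh1 : (1 : ℝ) ≤ h := by exact_mod_cast (mem_Icc.mp hh).1
    have hπh : 0 < π * h := by positivity
    rw [abs_div, abs_of_pos hπh, div_le_iff₀ hπh]
    calc |sin (2 * π * h * x)| ≤ |2 * π * h * x| := abs_sin_le_abs
      _ = 2 * x * (π * h) := by rw [abs_of_nonneg (by positivity)]; ring
  calc |sineSum N x| ≤ ∑ h ∈ Icc 1 N, |sin (2 * π * h * x) / (π * h)| :=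
        abs_sum_le_sum_abs _ _
    _ ≤ #(Icc 1 N) • (2 * x) := sum_le_card_nsmul _ _ _ hterm
    _ = 2 * N * x := by
      rw [Int.card_Icc, add_sub_cancel_right, nsmul_eq_mul, ← Int.cast_natCast,
        Int.toNat_of_nonneg hN]
      ring

theorem abs_integral_mul_deriv_le_of_deriv_nonpos {u u' v v' : ℝ → ℝ} {a b M : ℝ}
    (hab : a ≤ b) (hu : ∀ t ∈ Set.Icc a b, HasDerivAt u (u' t) t)
    (hv : ∀ t ∈ Set.Icc a b, HasDerivAt v (v' t) t)
    (hu' : IntervalIntegrable u' MeasureTheory.volume a b)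
    (hv' : IntervalIntegrable v' MeasureTheory.volume a b)
    (hu'_nonpos : ∀ t ∈ Set.Icc a b, u' t ≤ 0) (hub : 0 ≤ u b)
    (hvM : ∀ t ∈ Set.Icc a b, |v t| ≤ M) :
    |∫ t in a..b, u t * v' t| ≤ 2 * M * u a := by
  rw [← Set.uIcc_of_le hab] at hu hv
  have hFTC : ∫ t in a..b, -u' t = u a - u b := by
    rw [intervalIntegral.integral_neg, intervalIntegral.integral_eq_sub_of_hasDerivAt hu hu']
    ring
  have hua : u b ≤ u a := by
    have : 0 ≤ ∫ t in a..b, -u' t :=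
      intervalIntegral.integral_nonneg hab fun t ht => neg_nonneg.mpr (hu'_nonpos t ht)
    linarith
  have hrest : |∫ t in a..b, u' t * v t| ≤ M * (u a - u b) := by
    rw [← hFTC, ← intervalIntegral.integral_const_mul]
    refine intervalIntegral.norm_integral_le_of_norm_le (f := fun t => u' t * v t) hab
      (Filter.Eventually.of_forall fun t ht => ?_) (hu'.neg.const_mul M)
    have ht' := Set.Ioc_subset_Icc_self ht
    rw [Real.norm_eq_abs, abs_mul, abs_of_nonpos (hu'_nonpos t ht'), mul_comm M]
    exact mul_le_mul_of_nonneg_left (hvM t ht') (neg_nonneg.mpr (hu'_nonpos t ht'))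
  rw [intervalIntegral.integral_mul_deriv_eq_deriv_mul hu hv hu' hv']
  calc |u b * v b - u a * v a - ∫ t in a..b, u' t * v t|
      ≤ |u b * v b| + |u a * v a| + |∫ t in a..b, u' t * v t| :=
        (abs_sub _ _).trans (add_le_add_left (abs_sub _ _) _)
    _ ≤ u b * M + u a * M + M * (u a - u b) := by
        rw [abs_mul, abs_mul, abs_of_nonneg hub, abs_of_nonneg (hub.trans hua)]
        gcongr
        · exact hvM b (Set.right_mem_Icc.mpr hab)
        · exact hub.trans hua
        · exact hvM a (Set.left_mem_Icc.mpr hab)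
    _ = 2 * M * u a := by ring

theorem continuous_dirichletKernel (N : ℤ) : Continuous (dirichletKernel N) := by
  unfold dirichletKernel
  fun_prop

theorem integral_dirichletKernel (N : ℤ) (x : ℝ) :
    ∫ t in x..1 / 2, dirichletKernel N t = -(x - 1 / 2 + sineSum N x) := by
  have hderiv : ∀ t, HasDerivAt (fun t => t - 1 / 2 + sineSum N t) (dirichletKernel N t) t :=
    fun t => (((hasDerivAt_id' t).sub_const (1 / 2)).add (hasDerivAt_sineSum N t)).congr_deriv
      (by ring)
  rw [intervalIntegral.integral_eq_sub_of_hasDerivAt (fun t _ => hderiv t)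
    ((continuous_dirichletKernel N).intervalIntegrable _ _), sineSum_half]
  ring

theorem abs_sub_half_add_sineSum_le {N : ℤ} (hN : 0 ≤ N) {x : ℝ} (hx0 : 0 < x)
    (hx : x ≤ 1 / 2) :
    |x - 1 / 2 + sineSum N x| ≤ 1 / ((2 * N + 1) * π * x) := by
  set c := (2 * N + 1) * π with hc_def
  have hc : 0 < c := by
    have : (0 : ℝ) ≤ N := by exact_mod_cast hN
    rw [hc_def]; positivity
  have hπt : ∀ t ∈ Set.Icc x (1 / 2), π * t ∈ Set.Icc 0 (π / 2) := fun t ht =>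
    ⟨by nlinarith [pi_pos, ht.1], by nlinarith [pi_pos, ht.2]⟩
  have hsin : ∀ t ∈ Set.Icc x (1 / 2), 0 < sin (π * t) := fun t ht =>
    sin_pos_of_pos_of_lt_pi (by nlinarith [pi_pos, ht.1]) (by nlinarith [pi_pos, ht.2])
  have hkernel : Set.EqOn (dirichletKernel N) (fun t => (sin (π * t))⁻¹ * sin (c * t))
      (Set.uIcc x (1 / 2)) := fun t ht => by
    rw [Set.uIcc_of_le hx] at ht
    simp only [hc_def]
    rw [← sin_mul_dirichletKernel hN, inv_mul_cancel_left₀ (hsin t ht).ne']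
  have hu : ∀ t ∈ Set.Icc x (1 / 2), HasDerivAt (fun t => (sin (π * t))⁻¹)
      (-(π * cos (π * t)) / sin (π * t) ^ 2) t := fun t ht =>
    (((hasDerivAt_id' t).const_mul π).sin.inv (hsin t ht).ne').congr_deriv (by ring)
  have hv : ∀ t ∈ Set.Icc x (1 / 2), HasDerivAt (fun t => -cos (c * t) / c) (sin (c * t)) t :=
    fun t _ => (((hasDerivAt_id' t).const_mul c).cos.neg.div_const c).congr_deriv
      (by field_simp)
  have hu' : IntervalIntegrable (fun t => -(π * cos (π * t)) / sin (π * t) ^ 2)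
      MeasureTheory.volume x (1 / 2) := by
    refine ContinuousOn.intervalIntegrable ?_
    rw [Set.uIcc_of_le hx]
    exact ContinuousOn.div (by fun_prop) (by fun_prop) fun t ht => (pow_pos (hsin t ht) 2).ne'
  have hbound := abs_integral_mul_deriv_le_of_deriv_nonpos (M := 1 / c) hx hu hv hu'
    (Continuous.intervalIntegrable (by fun_prop) _ _)
    (fun t ht => div_nonpos_of_nonpos_of_nonneg
      (neg_nonpos.mpr (mul_nonneg pi_pos.le (cos_nonneg_of_mem_Icc
        ⟨by linarith [(hπt t ht).1, pi_pos], (hπt t ht).2⟩))) (sq_nonneg _))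
    (inv_nonneg.mpr (hsin _ ⟨hx, le_rfl⟩).le) (fun t _ => by
      rw [abs_div, abs_neg, abs_of_pos hc]
      gcongr
      exact abs_cos_le_one _)
  have hjordan : 2 * x ≤ sin (π * x) := by
    calc 2 * x = 2 / π * (π * x) := by field_simp
      _ ≤ sin (π * x) := mul_le_sin (hπt x ⟨le_rfl, hx⟩).1 (hπt x ⟨le_rfl, hx⟩).2
  calc |x - 1 / 2 + sineSum N x| = |∫ t in x..1 / 2, (sin (π * t))⁻¹ * sin (c * t)| := by
        rw [← intervalIntegral.integral_congr hkernel, integral_dirichletKernel, abs_neg]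
    _ ≤ 2 * (1 / c) * (sin (π * x))⁻¹ := hbound
    _ ≤ 2 * (1 / c) * (2 * x)⁻¹ := by gcongr
    _ = 1 / (c * x) := by field_simp

theorem abs_sub_half_add_sineSum_floor_le {H : ℝ} (hH : 0 < H) {x : ℝ} (hx0 : 0 < x)
    (hx : x ≤ 1 / 2) :
    |x - 1 / 2 + sineSum ⌊H⌋ x| ≤ 4 * min 1 (H * x)⁻¹ := by
  set N := ⌊H⌋
  have hN : 0 ≤ N := Int.floor_nonneg.mpr hH.le
  have hN' : (0 : ℝ) ≤ N := by exact_mod_cast hN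
  have hNH : (N : ℝ) ≤ H := Int.floor_le H
  have hHN : H < N + 1 := Int.lt_floor_add_one H
  rcases le_or_gt 1 (H * x) with hHx | hHx
  · rw [min_eq_right (inv_le_one_of_one_le₀ hHx)]
    have hHx' : H * x ≤ (2 * N + 1) * π * x := by
      gcongr
      nlinarith [pi_gt_three]
    have : 1 / ((2 * N + 1) * π * x) ≤ (H * x)⁻¹ := by
      rw [one_div]
      gcongr
    linarith [abs_sub_half_add_sineSum_le hN hx0 hx, inv_nonneg.mpr (zero_le_one.trans hHx)]
  · rw [min_eq_left (one_le_inv₀ (by nlinarith) |>.mpr hHx.le)]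
    calc |x - 1 / 2 + sineSum N x| ≤ |x - 1 / 2| + |sineSum N x| := abs_add_le _ _
      _ ≤ 1 / 2 + 2 * N * x :=
        add_le_add (abs_le.mpr ⟨by linarith, by linarith⟩) (abs_sineSum_le hN hx0.le)
      _ ≤ 4 * 1 := by nlinarith

theorem abs_fract_sub_half_add_sineSum_eq (N : ℤ) {θ : ℝ} (hθ : nint θ ≠ 0) :
    |θ - ⌊θ⌋ - 1 / 2 + sineSum N θ| = |nint θ - 1 / 2 + sineSum N (nint θ)| := by
  set η := θ - round θ
  have hη_half : |η| ≤ 1 / 2 := abs_sub_round θ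
  have hfract : θ - ⌊θ⌋ = Int.fract η := (Int.fract_sub_intCast θ (round θ)).symm
  have hsine : sineSum N θ = sineSum N η := by
    rw [← sineSum_add_intCast N η (round θ), sub_add_cancel]
  rw [hfract, hsine]
  have hnint : nint θ = |η| := rfl
  rw [hnint] at hθ ⊢
  rcases lt_or_gt_of_ne (abs_ne_zero.mp hθ) with hneg | hpos
  · rw [abs_of_neg hneg] at hη_half ⊢
    have hfract_neg : Int.fract (-η) = -η := Int.fract_eq_self.mpr ⟨by linarith, by linarith⟩
    have : Int.fract η = 1 + η := by
      rw [← neg_neg η, Int.fract_neg (by linarith), hfract_neg]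
      ring
    rw [this, ← neg_neg η, sineSum_neg, neg_neg, ← abs_neg]
    ring_nf
  · rw [abs_of_pos hpos] at hη_half ⊢
    rw [Int.fract_eq_self.mpr ⟨hpos.le, by linarith⟩]

theorem abs_fract_sub_half_add_sineSum_of_nint_eq_zero (N : ℤ) {θ : ℝ} (hθ : nint θ = 0) :
    |θ - ⌊θ⌋ - 1 / 2 + sineSum N θ| = 1 / 2 := by
  obtain ⟨k, rfl⟩ : ∃ k : ℤ, θ = k := ⟨round θ, sub_eq_zero.mp (abs_eq_zero.mp hθ)⟩
  have hsine : sineSum N k = 0 := by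
    rw [← zero_add (k : ℝ), sineSum_add_intCast]
    simp [sineSum]
  rw [hsine, Int.floor_intCast]
  norm_num

theorem stmt_8 :
    ∃ K > (0:ℝ), ∀ (H θ : ℝ), 1 < H →
      ‖((θ - ⌊θ⌋ - 1/2 : ℝ) : ℂ) +
          ∑ h ∈ (Finset.Icc (-⌊H⌋) ⌊H⌋).erase 0,
            e (θ * h) / (2 * Real.pi * Complex.I * h)‖ ≤
        K * min 1 (if nint θ = 0 then 1 else (H * nint θ)⁻¹) := by
  refine ⟨4, by norm_num, fun H θ hH => ?_⟩
  rw [sum_e_div_eq_sineSum, ← Complex.ofReal_add, Complex.norm_real, Real.norm_eq_abs]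
  split_ifs with hθ
  · rw [abs_fract_sub_half_add_sineSum_of_nint_eq_zero _ hθ]
    norm_num
  · rw [abs_fract_sub_half_add_sineSum_eq _ hθ]
    exact abs_sub_half_add_sineSum_floor_le (by linarith)
      (lt_of_le_of_ne (abs_nonneg _) (Ne.symm hθ)) (abs_sub_round θ)
end
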